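/- arXiv:2409.18229 — 8 statements merged into one kernel-verified Lean document; each statement's English description precedes it below -/
import Mathlib

section
/- Let p_1, …, p_r and p be pairwise distinct primes, let 1 ≤ s ≤ r with 3r ≥ 8s + 5, and let n = p_1^2·p_2^2···p_s^2·p_{s+1}···p_r. Then H(n·p^2) − H(n·p) < 0, i.e. H(n·p^2) < H(n·p). -/
/-!
The entropy of `∏ qᵢ ^ eᵢ` (distinct primes `qᵢ`) depends only on the exponents. For `n p ^ k`
the exponents are `2` (`s` times), `1` (`r - s` times) and `k`, so with `M = r + s + 1`,
`H(n p) = log M - 2 s log 2 / M` and `H(n p²) = log (M + 1) - 2 (s + 1) log 2 / (M + 1)`.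
As `log (M + 1) - log M < 1 / M`, it suffices that
`1 / M ≤ 2 (s + 1) log 2 / (M + 1) - 2 s log 2 / M`, i.e. `r + s + 2 ≤ 2 log 2 · (r + 1)`,
which follows from `8 s + 5 ≤ 3 r` because `2 log 2 > 11 / 8`.
-/

/-- The entropy of a positive integer `n ≥ 2` with prime factorization
`n = p_1^{α_1} ⋯ p_r^{α_r}`: `H(n) = log Ω(n) − (1/Ω(n)) ∑ α_i log α_i`,
where `Ω(n)` counts prime factors with multiplicity. -/
noncomputable def numEntropy (n : ℕ) : ℝ :=
  Real.log (n.primeFactorsList.length : ℝ) -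
    (1 / (n.primeFactorsList.length : ℝ)) *
      ∑ p ∈ n.primeFactors, (n.factorization p : ℝ) * Real.log (n.factorization p)

open Finset Real

section PrimePowerProduct

variable {ι : Type*} [Fintype ι] {q : ι → ℕ}

theorem factorization_prod_prime_pow (hq : ∀ i, (q i).Prime) (e : ι → ℕ) :
    (∏ i, q i ^ e i).factorization = ∑ i, Finsupp.single (q i) (e i) := by
  rw [Nat.factorization_prod fun i _ => pow_ne_zero _ (hq i).ne_zero]
  exact sum_congr rfl fun i _ => (hq i).factorization_pow

theorem factorization_prod_prime_pow_apply (hq : ∀ i, (q i).Prime) (hinj : q.Injective)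
    (e : ι → ℕ) (j : ι) : (∏ i, q i ^ e i).factorization (q j) = e j := by
  classical
  rw [factorization_prod_prime_pow hq, Finsupp.finsetSum_apply,
    sum_eq_single j (fun i _ hij => Finsupp.single_eq_of_ne' (hinj.ne hij)) (by simp)]
  exact Finsupp.single_eq_same

theorem sum_primeFactors_prod_pow {M : Type*} [AddCommMonoid M] (hq : ∀ i, (q i).Prime)
    (hinj : q.Injective) (e : ι → ℕ) (g : ℕ → M) (hg : g 0 = 0) :
    ∑ p ∈ (∏ i, q i ^ e i).primeFactors, g ((∏ i, q i ^ e i).factorization p) =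
      ∑ i, g (e i) := by
  classical
  have hsupp : (∏ i, q i ^ e i).factorization.support ⊆ univ.image q := by
    rw [factorization_prod_prime_pow hq]
    refine Finsupp.support_finsetSum.trans fun p hp => ?_
    obtain ⟨i, -, hi⟩ := mem_biUnion.1 hp
    rw [mem_singleton.1 (Finsupp.support_single_subset hi)]
    exact mem_image_of_mem q (mem_univ i)
  rw [← Nat.support_factorization, ← Finsupp.sum,
    Finsupp.sum_of_support_subset _ hsupp _ fun _ _ => hg, sum_image fun i _ j _ h => hinj h]
  exact sum_congr rfl fun i _ => by rw [factorization_prod_prime_pow_apply hq hinj]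

theorem numEntropy_prod_pow (hq : ∀ i, (q i).Prime) (hinj : q.Injective) (e : ι → ℕ) :
    numEntropy (∏ i, q i ^ e i) =
      log (∑ i, e i : ℕ) - 1 / (∑ i, e i : ℕ) * ∑ i, (e i : ℝ) * log (e i) := by
  have hΩ : (∏ i, q i ^ e i).primeFactorsList.length = ∑ i, e i := by
    rw [← ArithmeticFunction.cardFactors_apply, ArithmeticFunction.cardFactors_eq_sum_factorization,
      Finsupp.sum, Nat.support_factorization]
    exact sum_primeFactors_prod_pow hq hinj e id rfl
  rw [numEntropy, hΩ, sum_primeFactors_prod_pow hq hinj e (fun a => (a : ℝ) * log a) (by simp)]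

theorem numEntropy_prod_pow_mul_pow (hq : ∀ i, (q i).Prime) (hinj : q.Injective) {p : ℕ}
    (hp : p.Prime) (hpne : ∀ i, q i ≠ p) (e : ι → ℕ) (k : ℕ) :
    numEntropy ((∏ i, q i ^ e i) * p ^ k) =
      log (∑ i, e i + k : ℕ) -
        1 / (∑ i, e i + k : ℕ) * (∑ i, (e i : ℝ) * log (e i) + k * log k) := by
  have hprod : (∏ i, q i ^ e i) * p ^ k = ∏ i : Option ι, (i.elim p q) ^ (i.elim k e) := by
    rw [Fintype.prod_option, mul_comm]; rfl
  have hinj' : (fun i : Option ι => i.elim p q).Injective := by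
    rintro (_ | i) (_ | j) h
    · rfl
    · exact absurd h.symm (hpne j)
    · exact absurd h (hpne i)
    · exact congrArg some (hinj h)
  rw [hprod, numEntropy_prod_pow (by rintro (_ | i); exacts [hp, hq i]) hinj']
  simp only [Fintype.sum_option, Option.elim]
  rw [add_comm k, add_comm (_ * log k)]

end PrimePowerProduct

theorem sum_fin_apply_ite_lt {M : Type*} [AddCommMonoid M] {α : Type*} {r s : ℕ} (h : s ≤ r)
    (g : α → M) (a b : α) :
    ∑ i : Fin r, g (if (i : ℕ) < s then a else b) = s • g a + (r - s) • g b := by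
  rw [Fin.sum_univ_eq_sum_range (fun i => g (if i < s then a else b)), ← sum_range_add_sum_Ico _ h,
    sum_congr rfl fun i hi => congrArg g (if_pos (mem_range.1 hi)),
    sum_congr rfl fun i hi => congrArg g (if_neg (mem_Ico.1 hi).1.not_gt)]
  simp

theorem log_add_one_sub_log_lt {x : ℝ} (hx : 0 < x) : log (x + 1) - log x < 1 / x := by
  rw [← log_div (by positivity) hx.ne']
  calc log ((x + 1) / x) < (x + 1) / x - 1 :=
        log_lt_sub_one_of_pos (by positivity) (by rw [Ne, div_eq_one_iff_eq hx.ne']; linarith)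
    _ = 1 / x := by field_simp; ring

theorem entropy_gap {r s : ℝ} (hs : 0 ≤ s) (hr : 8 * s + 5 ≤ 3 * r) :
    log (r + s + 2) - 1 / (r + s + 2) * (s * (2 * log 2) + 2 * log 2) <
      log (r + s + 1) - 1 / (r + s + 1) * (s * (2 * log 2)) := by
  set M := r + s + 1
  have hM : 0 < M := by linarith
  rw [show r + s + 2 = M + 1 by ring]
  have hr' : M + 1 ≤ 2 * log 2 * (M - s) := by nlinarith [log_two_gt_d9]
  have hcoef : 1 / M ≤ 1 / (M + 1) * (s * (2 * log 2) + 2 * log 2) - 1 / M * (s * (2 * log 2)) := by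
    rw [div_mul_eq_mul_div, div_mul_eq_mul_div, one_mul, one_mul,
      div_sub_div _ _ (by positivity) hM.ne', div_le_div_iff₀ hM (by positivity)]
    nlinarith [mul_le_mul_of_nonneg_left hr' hM.le]
  linarith [log_add_one_sub_log_lt hM]

theorem entropy_np_sq_lt_entropy_np_general
    (r s : ℕ) (hr : 8 * s + 5 ≤ 3 * r)
    (ps : Fin r → ℕ) (hps : ∀ i, (ps i).Prime) (hinj : Function.Injective ps)
    (p : ℕ) (hp : p.Prime) (hpne : ∀ i, ps i ≠ p)
    (n : ℕ) (hn : n = ∏ i : Fin r, ps i ^ (if (i : ℕ) < s then 2 else 1)) :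
    numEntropy (n * p ^ 2) < numEntropy (n * p) := by
  have hsr : s ≤ r := by omega
  have hΩ : ∑ i : Fin r, (if (i : ℕ) < s then 2 else 1) = r + s := by
    refine (sum_fin_apply_ite_lt hsr id 2 1).trans ?_
    simp only [id, smul_eq_mul]
    omega
  have hsum : ∑ i : Fin r, ((if (i : ℕ) < s then 2 else 1 : ℕ) : ℝ) *
      log (if (i : ℕ) < s then 2 else 1 : ℕ) = s * (2 * log 2) := by
    rw [sum_fin_apply_ite_lt hsr (fun a : ℕ => (a : ℝ) * log a)]
    simp
  conv_rhs => rw [← pow_one p]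
  rw [hn, numEntropy_prod_pow_mul_pow hps hinj hp hpne,
    numEntropy_prod_pow_mul_pow hps hinj hp hpne, hΩ, hsum]
  push_cast [log_one, mul_zero, add_zero]
  exact entropy_gap (Nat.cast_nonneg s) (by exact_mod_cast hr)

theorem entropy_np_sq_lt_entropy_np
    (r s : ℕ) (hs : 1 ≤ s) (hsr : s ≤ r) (hr : 8 * s + 5 ≤ 3 * r)
    (ps : Fin r → ℕ) (hps : ∀ i, (ps i).Prime) (hinj : Function.Injective ps)
    (p : ℕ) (hp : p.Prime) (hpne : ∀ i, ps i ≠ p)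
    (n : ℕ) (hn : n = ∏ i : Fin r, ps i ^ (if (i : ℕ) < s then 2 else 1)) :
    numEntropy (n * p ^ 2) < numEntropy (n * p) :=
  entropy_np_sq_lt_entropy_np_general r s hr ps hps hinj p hp hpne n hn
end

section
/- Let p and q be distinct primes, let α, β be positive integers, let ε be a natural number with β > ε, and set n = p^α·q^β and m = p^{α+ε}·q^{β−ε}. Then H(m) − H(n) ≤ (α·log α + β·log β)/(α + β) − log((α + β)/2). -/
/-! For `n = p^a q^b` the entropy `H(n)` is the binary entropy of `a / (a + b)`, hence at most
`log 2`. Since `m` again has this shape, `H(m) - H(n) ≤ log 2 - H(n)`, and the right-hand side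
of the claim is exactly `log 2 - H(n)`. -/

open ArithmeticFunction in
theorem numEntropy_prime_pow_mul_prime_pow {p q : ℕ} (hp : p.Prime) (hq : q.Prime) (hpq : p ≠ q)
    (a b : ℕ) :
    numEntropy (p ^ a * q ^ b) =
      Real.log ((a : ℝ) + b) - ((a : ℝ) * Real.log a + (b : ℝ) * Real.log b) / ((a : ℝ) + b) := by
  have hpa : p ^ a ≠ 0 := pow_ne_zero _ hp.ne_zero
  have hqb : q ^ b ≠ 0 := pow_ne_zero _ hq.ne_zero
  have hlen : (p ^ a * q ^ b).primeFactorsList.length = a + b := by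
    rw [← cardFactors_apply, cardFactors_mul hpa hqb, cardFactors_apply_prime_pow hp,
      cardFactors_apply_prime_pow hq]
  have hfac : (p ^ a * q ^ b).factorization = Finsupp.single p a + Finsupp.single q b := by
    rw [Nat.factorization_mul hpa hqb, hp.factorization_pow, hq.factorization_pow]
  -- `{p, q}` is larger than `primeFactors` when `a = 0` or `b = 0`; the extra terms vanish
  have hsum : ∑ r ∈ (p ^ a * q ^ b).primeFactors,
        ((p ^ a * q ^ b).factorization r : ℝ) * Real.log ((p ^ a * q ^ b).factorization r) =
      ∑ r ∈ {p, q}, ((p ^ a * q ^ b).factorization r : ℝ) *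
        Real.log ((p ^ a * q ^ b).factorization r) := by
    refine Finset.sum_subset ?_ fun r _ hr => ?_
    · rw [← Nat.support_factorization, hfac]
      exact Finsupp.support_add.trans
        (Finset.union_subset_union Finsupp.support_single_subset Finsupp.support_single_subset)
    · rw [← Nat.support_factorization] at hr
      simp [Finsupp.notMem_support_iff.mp hr]
  rw [numEntropy, hlen, hsum, Finset.sum_pair hpq, hfac]
  simp [hpq, hpq.symm, div_eq_inv_mul]

theorem Real.binEntropy_div_add {a b : ℝ} (hab : a + b ≠ 0) :
    Real.binEntropy (a / (a + b)) =
      Real.log (a + b) - (a * Real.log a + b * Real.log b) / (a + b) := by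
  have hcompl : 1 - a / (a + b) = b / (a + b) := by field_simp; ring
  rw [Real.binEntropy_eq_negMulLog_add_negMulLog_one_sub, hcompl, div_eq_mul_inv, div_eq_mul_inv,
    Real.negMulLog_mul, Real.negMulLog_mul]
  simp only [Real.negMulLog, Real.log_inv]
  field_simp
  ring

theorem numEntropy_prime_pow_mul_prime_pow_le_log_two {p q : ℕ} (hp : p.Prime) (hq : q.Prime)
    (hpq : p ≠ q) (a b : ℕ) :
    numEntropy (p ^ a * q ^ b) ≤ Real.log 2 := by
  rw [numEntropy_prime_pow_mul_prime_pow hp hq hpq]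
  rcases eq_or_ne ((a : ℝ) + b) 0 with hab | hab
  · simp [hab, Real.log_nonneg one_le_two]
  · rw [← Real.binEntropy_div_add hab]
    exact Real.binEntropy_le_log_two

theorem entropy_diff_le_general (p q α β ε : ℕ) (hp : p.Prime) (hq : q.Prime) (hpq : p ≠ q)
    (hβ : 0 < β)
    (n m : ℕ) (hn : n = p ^ α * q ^ β) (hm : m = p ^ (α + ε) * q ^ (β - ε)) :
    numEntropy m - numEntropy n ≤
      ((α : ℝ) * Real.log α + (β : ℝ) * Real.log β) / ((α : ℝ) + β) -
        Real.log (((α : ℝ) + β) / 2) := by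
  subst hn hm
  have hαβ : (α : ℝ) + β ≠ 0 := by positivity
  have hHm := numEntropy_prime_pow_mul_prime_pow_le_log_two hp hq hpq (α + ε) (β - ε)
  rw [numEntropy_prime_pow_mul_prime_pow hp hq hpq α β, Real.log_div hαβ two_ne_zero]
  linarith

theorem entropy_diff_le (p q α β ε : ℕ) (hp : p.Prime) (hq : q.Prime) (hpq : p ≠ q)
    (hα : 0 < α) (hβ : 0 < β) (hε : ε < β)
    (n m : ℕ) (hn : n = p ^ α * q ^ β) (hm : m = p ^ (α + ε) * q ^ (β - ε)) :
    numEntropy m - numEntropy n ≤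
      ((α : ℝ) * Real.log α + (β : ℝ) * Real.log β) / ((α : ℝ) + β) -
        Real.log (((α : ℝ) + β) / 2) :=
  entropy_diff_le_general p q α β ε hp hq hpq hβ n m hn hm
end

section
/- Let p and q be distinct primes, let α, β be positive integers, let ε be a natural number with β > ε and (β − α)/2 ≥ ε, and set n = p^α·q^β and m = p^{α+ε}·q^{β−ε}. Then 0 ≤ H(m) − H(n) ≤ (α·log α + β·log β)/(α + β) − log((α + β)/2). -/
open Real

theorem ConvexOn.map_add_map_le_of_add_eq {s : Set ℝ} {f : ℝ → ℝ} (hf : ConvexOn ℝ s f)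
    {a b c d : ℝ} (ha : a ∈ s) (hb : b ∈ s) (hac : a ≤ c) (hcb : c ≤ b) (hsum : c + d = a + b) :
    f c + f d ≤ f a + f b := by
  rcases hac.trans hcb |>.eq_or_lt with hab | hab
  · obtain rfl : c = a := by linarith
    obtain rfl : d = b := by linarith
    rfl
  set t := (b - c) / (b - a)
  have hba : b - a ≠ 0 := sub_ne_zero.2 hab.ne'
  have ht₀ : 0 ≤ t := div_nonneg (by linarith) (by linarith)
  have ht₁ : 0 ≤ 1 - t := by
    rw [sub_nonneg, div_le_one (by linarith)]
    linarith
  have hc : t • a + (1 - t) • b = c := by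
    simp only [t, smul_eq_mul]
    field_simp
    ring
  have hd : (1 - t) • a + t • b = d := by
    rw [← add_sub_cancel_left c d, hsum, ← hc]
    simp only [smul_eq_mul]
    ring
  have hfc := hf.2 ha hb ht₀ ht₁ (add_sub_cancel t 1)
  have hfd := hf.2 ha hb ht₁ ht₀ (sub_add_cancel 1 t)
  rw [hc] at hfc
  rw [hd] at hfd
  simp only [smul_eq_mul] at hfc hfd
  linarith

theorem numEntropy_pow_mul_pow {p q : ℕ} (hp : p.Prime) (hq : q.Prime) (hpq : p ≠ q)
    (a b : ℕ) :
    numEntropy (p ^ a * q ^ b) =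
      log ((a : ℝ) + b) - ((a : ℝ) * log a + (b : ℝ) * log b) / ((a : ℝ) + b) := by
  have hpa : p ^ a ≠ 0 := pow_ne_zero _ hp.ne_zero
  have hqb : q ^ b ≠ 0 := pow_ne_zero _ hq.ne_zero
  have hΩ : (p ^ a * q ^ b).primeFactorsList.length = a + b := by
    rw [← ArithmeticFunction.cardFactors_apply, ArithmeticFunction.cardFactors_mul hpa hqb,
      ArithmeticFunction.cardFactors_apply_prime_pow hp,
      ArithmeticFunction.cardFactors_apply_prime_pow hq]
  have hfac : (p ^ a * q ^ b).factorization = Finsupp.single p a + Finsupp.single q b := by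
    rw [Nat.factorization_mul hpa hqb, hp.factorization_pow, hq.factorization_pow]
  have hsum : ∑ r ∈ (p ^ a * q ^ b).primeFactors,
      ((p ^ a * q ^ b).factorization r : ℝ) * log ((p ^ a * q ^ b).factorization r) =
        (a : ℝ) * log a + (b : ℝ) * log b := by
    change (p ^ a * q ^ b).factorization.sum (fun _ k => (k : ℝ) * log k) = _
    rw [hfac, Finsupp.sum_single_add_single _ _ _ _ _ hpq (by simp)]
  rw [numEntropy, hΩ, hsum]
  push_cast
  ring

theorem entropy_diff_nonneg_and_le_general (p q α β ε : ℕ) (hp : p.Prime) (hq : q.Prime)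
    (hpq : p ≠ q)
    (hε2 : (ε : ℝ) ≤ ((β : ℝ) - (α : ℝ)) / 2)
    (n m : ℕ) (hn : n = p ^ α * q ^ β) (hm : m = p ^ (α + ε) * q ^ (β - ε)) :
    0 ≤ numEntropy m - numEntropy n ∧
      numEntropy m - numEntropy n ≤
        ((α : ℝ) * Real.log α + (β : ℝ) * Real.log β) / ((α : ℝ) + β) -
          Real.log (((α : ℝ) + β) / 2) := by
  have hα : (0 : ℝ) ≤ α := α.cast_nonneg
  have hεβ : ε ≤ β := by
    have : (ε : ℝ) ≤ β := by linarith [ε.cast_nonneg (α := ℝ)]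
    exact_mod_cast this
  set S : ℝ := α + β
  have hS : 0 ≤ S := by positivity
  set A := (α : ℝ) * log α + (β : ℝ) * log β
  set B := ((α : ℝ) + ε) * log ((α : ℝ) + ε) + ((β : ℝ) - ε) * log ((β : ℝ) - ε)
  set M := S / 2 * log (S / 2) + S / 2 * log (S / 2)
  have hBA : B ≤ A := convexOn_mul_log.map_add_map_le_of_add_eq
    (Set.mem_Ici.2 hα) (Set.mem_Ici.2 β.cast_nonneg) (by linarith) (by linarith) (by ring)
  have hMB : M ≤ B := convexOn_mul_log.map_add_map_le_of_add_eq
    (Set.mem_Ici.2 (by linarith)) (Set.mem_Ici.2 (by linarith)) (by linarith) (by linarith)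
    (by ring)
  have hdiff : numEntropy m - numEntropy n = (A - B) / S := by
    rw [hm, hn, numEntropy_pow_mul_pow hp hq hpq, numEntropy_pow_mul_pow hp hq hpq]
    push_cast [hεβ]
    rw [show (α : ℝ) + ε + (β - ε) = S by ring]
    ring
  have hbound : A / S - log (S / 2) = (A - M) / S := by
    rcases eq_or_ne S 0 with h | h
    · simp [h]
    · field_simp
      ring
  rw [hdiff, hbound]
  exact ⟨div_nonneg (by linarith) hS, div_le_div_of_nonneg_right (by linarith) hS⟩

theorem entropy_diff_nonneg_and_le (p q α β ε : ℕ) (hp : p.Prime) (hq : q.Prime)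
    (hpq : p ≠ q) (hα : 0 < α) (hβ : 0 < β) (hε : ε < β)
    (hε2 : (ε : ℝ) ≤ ((β : ℝ) - (α : ℝ)) / 2)
    (n m : ℕ) (hn : n = p ^ α * q ^ β) (hm : m = p ^ (α + ε) * q ^ (β - ε)) :
    0 ≤ numEntropy m - numEntropy n ∧
      numEntropy m - numEntropy n ≤
        ((α : ℝ) * Real.log α + (β : ℝ) * Real.log β) / ((α : ℝ) + β) -
          Real.log (((α : ℝ) + β) / 2) :=
  entropy_diff_nonneg_and_le_general p q α β ε hp hq hpq hε2 n m hn hm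
end

section
/- Let p and q be distinct primes, let α, β be positive integers, let ε be a natural number with β > ε, set n = p^α·q^β and m = p^{α+ε}·q^{β−ε}, and let u ≥ 2 be an integer with gcd(m, u) = 1 and gcd(n, u) = 1. Then H(m·u) − H(n·u) = (α + β)/(α + β + Ω(u)) · (H(m) − H(n)). -/
lemma sum_split (a b : ℕ) (ha : a ≠ 0) (hb : b ≠ 0) (hab : Nat.Coprime a b) :
    ∑ p ∈ (a * b).primeFactors,
        ((a * b).factorization p : ℝ) * Real.log ((a * b).factorization p)
      = (∑ p ∈ a.primeFactors, (a.factorization p : ℝ) * Real.log (a.factorization p))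
      + ∑ p ∈ b.primeFactors, (b.factorization p : ℝ) * Real.log (b.factorization p) := by
  rw [Nat.primeFactors_mul ha hb, Finset.sum_union hab.disjoint_primeFactors]
  congr 1
  · refine Finset.sum_congr rfl fun r hr => ?_
    have hra := Nat.dvd_of_mem_primeFactors hr
    have hrp := Nat.prime_of_mem_primeFactors hr
    have hrb : ¬ r ∣ b := fun h => hrp.one_lt.ne'
      (Nat.eq_one_of_dvd_one (hab ▸ Nat.dvd_gcd hra h))
    rw [Nat.factorization_mul ha hb]
    simp [Nat.factorization_eq_zero_of_not_dvd hrb]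
  · refine Finset.sum_congr rfl fun r hr => ?_
    have hrb := Nat.dvd_of_mem_primeFactors hr
    have hrp := Nat.prime_of_mem_primeFactors hr
    have hra : ¬ r ∣ a := fun h => hrp.one_lt.ne'
      (Nat.eq_one_of_dvd_one (hab ▸ Nat.dvd_gcd h hrb))
    rw [Nat.factorization_mul ha hb]
    simp [Nat.factorization_eq_zero_of_not_dvd hra]

lemma len_mul (a b : ℕ) (ha : a ≠ 0) (hb : b ≠ 0) :
    (a * b).primeFactorsList.length
      = a.primeFactorsList.length + b.primeFactorsList.length := by
  rw [(Nat.perm_primeFactorsList_mul ha hb).length_eq, List.length_append]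

theorem entropy_diff_mul_coprime (p q α β ε : ℕ) (hp : p.Prime) (hq : q.Prime)
    (hpq : p ≠ q) (hα : 0 < α) (hβ : 0 < β) (hε : ε < β)
    (n m : ℕ) (hn : n = p ^ α * q ^ β) (hm : m = p ^ (α + ε) * q ^ (β - ε))
    (u : ℕ) (hu : 2 ≤ u) (hmu : Nat.gcd m u = 1) (hnu : Nat.gcd n u = 1) :
    numEntropy (m * u) - numEntropy (n * u) =
      ((α : ℝ) + β) / ((α : ℝ) + β + (u.primeFactorsList.length : ℝ)) *
        (numEntropy m - numEntropy n) := by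
  have hm0 : m ≠ 0 := by
    rw [hm]; exact Nat.mul_ne_zero (pow_ne_zero _ hp.pos.ne') (pow_ne_zero _ hq.pos.ne')
  have hn0 : n ≠ 0 := by
    rw [hn]; exact Nat.mul_ne_zero (pow_ne_zero _ hp.pos.ne') (pow_ne_zero _ hq.pos.ne')
  have hu0 : u ≠ 0 := by omega
  have hlm : m.primeFactorsList.length = α + β := by
    rw [hm, len_mul _ _ (pow_ne_zero _ hp.pos.ne') (pow_ne_zero _ hq.pos.ne'),
      hp.primeFactorsList_pow, hq.primeFactorsList_pow, List.length_replicate,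
      List.length_replicate]
    omega
  have hln : n.primeFactorsList.length = α + β := by
    rw [hn, len_mul _ _ (pow_ne_zero _ hp.pos.ne') (pow_ne_zero _ hq.pos.ne'),
      hp.primeFactorsList_pow, hq.primeFactorsList_pow, List.length_replicate,
      List.length_replicate]
  set Sm := ∑ r ∈ m.primeFactors, (m.factorization r : ℝ) * Real.log (m.factorization r)
  set Sn := ∑ r ∈ n.primeFactors, (n.factorization r : ℝ) * Real.log (n.factorization r)
  set Su := ∑ r ∈ u.primeFactors, (u.factorization r : ℝ) * Real.log (u.factorization r)
  have hSmu := sum_split m u hm0 hu0 hmu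
  have hSnu := sum_split n u hn0 hu0 hnu
  have hlmu := len_mul m u hm0 hu0
  have hlnu := len_mul n u hn0 hu0
  set U : ℝ := (u.primeFactorsList.length : ℝ) with hU
  have hU0 : 0 ≤ U := by positivity
  have hA : (0:ℝ) < (α:ℝ) + β := by
    have : (0:ℕ) < α + β := by omega
    push_cast
    exact_mod_cast this
  unfold numEntropy
  rw [hSmu, hSnu, hlmu, hlnu, hlm, hln]
  push_cast
  have hAU : (0:ℝ) < (α:ℝ) + β + U := by linarith
  field_simp
  ring
end

section
/- Let p < q be primes, let α, β be positive integers, let ε be a natural number with β > ε, set n = p^α·q^β and m = p^{α+ε}·q^{β−ε}, and let u ≥ 2 be an integer with gcd(m, u) = 1 and gcd(n, u) = 1. Then D(n·u‖m·u) = (α + β)/(α + β + Ω(u)) · D(n‖m). -/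
/-- `Ω(n)`: number of prime factors of `n` counted with multiplicity. -/
def bigOmega (n : ℕ) : ℕ := n.primeFactorsList.length

/-- The Kullback–Leibler divergence of two positive integers
`a = q_1^{a_1} ⋯ q_r^{a_r}` and `b = q'_1^{b_1} ⋯ q'_r^{b_r}` (primes listed in
ascending order): `D(a‖b) = log(Ω(b)/Ω(a)) − (1/Ω(a)) ∑_i a_i log (b_i/a_i)`. -/
noncomputable def numDivergence (a b : ℕ) : ℝ :=
  Real.log ((bigOmega b : ℝ) / (bigOmega a : ℝ)) -
    (1 / (bigOmega a : ℝ)) *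
      ∑ i ∈ Finset.range a.primeFactors.card,
        (a.factorization ((a.primeFactors.sort (· ≤ ·)).getD i 1) : ℝ) *
          Real.log ((b.factorization ((b.primeFactors.sort (· ≤ ·)).getD i 1) : ℝ) /
            (a.factorization ((a.primeFactors.sort (· ≤ ·)).getD i 1) : ℝ))

/-!
When `n` and `m` have the same prime factors, ranking the primes of `n` and of `m` pairs each prime
with itself, so `D(n‖m) = log (Ω m / Ω n) - (1 / Ω n) ∑_{r ∣ n} n_r log (m_r / n_r)`, and here
`Ω n = Ω m = α + β`. Multiplying both by `u` coprime to them adds the primes of `u` with equal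
exponents on both sides, whose terms vanish; so the sum is unchanged and only the normalisation
`1 / Ω` changes, from `1 / (α + β)` to `1 / (α + β + Ω u)`.
-/

open Finset ArithmeticFunction
open scoped ArithmeticFunction.Omega

theorem List.sum_range_length_getD {α M : Type*} [AddCommMonoid M] (l : List α) (d : α)
    (g : α → M) : ∑ i ∈ Finset.range l.length, g (l.getD i d) = (l.map g).sum := by
  rw [Finset.sum_range, ← Fin.sum_univ_fun_getElem]
  simp [List.getD_eq_getElem?_getD]

theorem Finset.sum_range_card_sort_getD {α M : Type*} [LinearOrder α] [AddCommMonoid M]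
    (s : Finset α) (d : α) (g : α → M) :
    ∑ i ∈ range #s, g ((s.sort (· ≤ ·)).getD i d) = ∑ x ∈ s, g x := by
  rw [← Finset.length_sort (· ≤ ·), List.sum_range_length_getD,
    ((s.sort_perm_toList (· ≤ ·)).map g).sum_eq, Finset.sum_map_toList]

theorem bigOmega_eq_cardFactors (n : ℕ) : bigOmega n = Ω n := cardFactors_apply.symm

theorem bigOmega_mul {a b : ℕ} (ha : a ≠ 0) (hb : b ≠ 0) :
    bigOmega (a * b) = bigOmega a + bigOmega b := by
  simp only [bigOmega_eq_cardFactors, cardFactors_mul ha hb]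

theorem bigOmega_prime_pow_mul_prime_pow {p q : ℕ} (hp : p.Prime) (hq : q.Prime) (a b : ℕ) :
    bigOmega (p ^ a * q ^ b) = a + b := by
  rw [bigOmega_eq_cardFactors, cardFactors_mul (pow_ne_zero _ hp.ne_zero)
    (pow_ne_zero _ hq.ne_zero), cardFactors_apply_prime_pow hp, cardFactors_apply_prime_pow hq]

theorem primeFactors_prime_pow_mul_prime_pow {p q a b : ℕ} (hp : p.Prime) (hq : q.Prime)
    (ha : a ≠ 0) (hb : b ≠ 0) : (p ^ a * q ^ b).primeFactors = {p, q} := by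
  rw [Nat.primeFactors_mul (pow_ne_zero _ hp.ne_zero) (pow_ne_zero _ hq.ne_zero),
    Nat.primeFactors_prime_pow ha hp, Nat.primeFactors_prime_pow hb hq]
  rfl

/-- The sum `∑ᵢ aᵢ log (bᵢ / aᵢ)` of `numDivergence a b`, with exponents paired by prime rather
than by rank. -/
noncomputable def divergenceSum (a b : ℕ) : ℝ :=
  ∑ r ∈ a.primeFactors,
    (a.factorization r : ℝ) * Real.log ((b.factorization r : ℝ) / (a.factorization r : ℝ))

theorem numDivergence_eq_of_primeFactors_eq {a b : ℕ} (h : a.primeFactors = b.primeFactors) :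
    numDivergence a b =
      Real.log ((bigOmega b : ℝ) / bigOmega a) - 1 / (bigOmega a : ℝ) * divergenceSum a b := by
  rw [numDivergence, ← h, divergenceSum, Finset.sum_range_card_sort_getD _ _
    fun r => (a.factorization r : ℝ) * Real.log ((b.factorization r : ℝ) / a.factorization r)]

theorem Nat.Coprime.factorization_eq_zero_of_mem_primeFactors {a b r : ℕ} (h : a.Coprime b)
    (hr : r ∈ a.primeFactors) : b.factorization r = 0 :=
  Finsupp.notMem_support_iff.mp fun hrb =>
    h.disjoint_primeFactors.notMem_of_mem_left_finset hr (Nat.support_factorization b ▸ hrb)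

theorem divergenceSum_mul_coprime {a b u : ℕ} (hau : a.Coprime u) (hbu : b.Coprime u) :
    divergenceSum (a * u) (b * u) = divergenceSum a b := by
  rw [divergenceSum, hau.primeFactors_mul, sum_union hau.disjoint_primeFactors,
    Nat.factorization_mul_of_coprime hau, Nat.factorization_mul_of_coprime hbu]
  have hu_part : ∑ r ∈ u.primeFactors, ((a.factorization + u.factorization) r : ℝ) *
      Real.log (((b.factorization + u.factorization) r : ℝ) /
        ((a.factorization + u.factorization) r : ℝ)) = 0 :=
    sum_eq_zero fun r hr => by
      simp [hau.symm.factorization_eq_zero_of_mem_primeFactors hr,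
        hbu.symm.factorization_eq_zero_of_mem_primeFactors hr]
  rw [hu_part, add_zero, divergenceSum]
  exact sum_congr rfl fun r hr => by simp [hau.factorization_eq_zero_of_mem_primeFactors hr]

theorem numDivergence_mul_coprime {a b u : ℕ} (ha : a ≠ 0) (hb : b ≠ 0) (hu : u ≠ 0)
    (hP : a.primeFactors = b.primeFactors) (hΩ : bigOmega a = bigOmega b)
    (hau : a.Coprime u) (hbu : b.Coprime u) :
    numDivergence (a * u) (b * u) =
      (bigOmega a : ℝ) / (bigOmega a + bigOmega u) * numDivergence a b := by
  have hPu : (a * u).primeFactors = (b * u).primeFactors := by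
    rw [hau.primeFactors_mul, hbu.primeFactors_mul, hP]
  have hΩu : bigOmega (a * u) = bigOmega (b * u) := by
    rw [bigOmega_mul ha hu, bigOmega_mul hb hu, hΩ]
  rw [numDivergence_eq_of_primeFactors_eq hPu, numDivergence_eq_of_primeFactors_eq hP,
    divergenceSum_mul_coprime hau hbu, ← hΩu, ← hΩ, Real.log_div_self, Real.log_div_self,
    bigOmega_mul ha hu]
  rcases eq_or_ne (bigOmega a) 0 with hΩ0 | hΩ0
  · obtain rfl : a = 1 := by
      simpa [ha, bigOmega_eq_cardFactors, cardFactors_eq_zero_iff_eq_zero_or_one] using hΩ0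
    simp [divergenceSum]
  · push_cast
    field_simp
    ring

theorem divergence_mul_coprime_general (p q α β ε : ℕ) (hp : p.Prime) (hq : q.Prime)
    (hα : 0 < α) (hβ : 0 < β) (hε : ε < β)
    (n m : ℕ) (hn : n = p ^ α * q ^ β) (hm : m = p ^ (α + ε) * q ^ (β - ε))
    (u : ℕ) (hu : 2 ≤ u) (hmu : Nat.gcd m u = 1) (hnu : Nat.gcd n u = 1) :
    numDivergence (n * u) (m * u) =
      ((α : ℝ) + β) / ((α : ℝ) + β + (bigOmega u : ℝ)) * numDivergence n m := by
  have hpow_ne_zero {a b : ℕ} : p ^ a * q ^ b ≠ 0 :=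
    mul_ne_zero (pow_ne_zero _ hp.ne_zero) (pow_ne_zero _ hq.ne_zero)
  have hP : n.primeFactors = m.primeFactors := by
    rw [hn, hm, primeFactors_prime_pow_mul_prime_pow hp hq (by omega) (by omega),
      primeFactors_prime_pow_mul_prime_pow hp hq (by omega) (by omega)]
  have hΩn : bigOmega n = α + β := hn ▸ bigOmega_prime_pow_mul_prime_pow hp hq α β
  have hΩm : bigOmega m = α + β := by
    rw [hm, bigOmega_prime_pow_mul_prime_pow hp hq]
    omega
  rw [numDivergence_mul_coprime (hn ▸ hpow_ne_zero) (hm ▸ hpow_ne_zero) (by omega) hP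
    (hΩn.trans hΩm.symm) hnu hmu, hΩn, Nat.cast_add]

theorem divergence_mul_coprime (p q α β ε : ℕ) (hp : p.Prime) (hq : q.Prime)
    (hpq : p < q) (hα : 0 < α) (hβ : 0 < β) (hε : ε < β)
    (n m : ℕ) (hn : n = p ^ α * q ^ β) (hm : m = p ^ (α + ε) * q ^ (β - ε))
    (u : ℕ) (hu : 2 ≤ u) (hmu : Nat.gcd m u = 1) (hnu : Nat.gcd n u = 1) :
    numDivergence (n * u) (m * u) =
      ((α : ℝ) + β) / ((α : ℝ) + β + (bigOmega u : ℝ)) * numDivergence n m :=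
  divergence_mul_coprime_general p q α β ε hp hq hα hβ hε n m hn hm u hu hmu hnu
end

section
/- There are no real numbers x, y with x > 0, y > 0, x ≠ 1 and x + y > 1 satisfying x^x · y^y = (x + y − 1)^y (real powers). -/
theorem no_real_solution_xx_yy (x y : ℝ) :
    ¬ (0 < x ∧ 0 < y ∧ x ≠ 1 ∧ 1 < x + y ∧ x ^ x * y ^ y = (x + y - 1) ^ y) := by
  rintro ⟨hx, hy, hx1, hxy, heq⟩
  have hs : 0 < x + y - 1 := by linarith
  have hlog : x * Real.log x + y * Real.log y = y * Real.log (x + y - 1) := by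
    have h := congrArg Real.log heq
    rw [Real.log_mul (ne_of_gt (Real.rpow_pos_of_pos hx x))
        (ne_of_gt (Real.rpow_pos_of_pos hy y)),
      Real.log_rpow hx, Real.log_rpow hy, Real.log_rpow hs] at h
    exact h
  -- strict lower bound: x * log x > x - 1
  have h1 : Real.log (1 / x) < 1 / x - 1 := by
    refine Real.log_lt_sub_one_of_pos (by positivity) ?_
    rw [ne_eq, div_eq_one_iff_eq hx.ne']
    exact fun h => hx1 h.symm
  rw [Real.log_div one_ne_zero hx.ne', Real.log_one] at h1
  have h1' : x - 1 < x * Real.log x := by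
    have := mul_lt_mul_of_pos_left h1 hx
    have hxx : x * (1 / x) = 1 := by field_simp
    nlinarith
  -- upper bound: y * log (x+y-1) - y * log y ≤ x - 1
  have h2 : Real.log ((x + y - 1) / y) ≤ (x + y - 1) / y - 1 :=
    Real.log_le_sub_one_of_pos (by positivity)
  rw [Real.log_div hs.ne' hy.ne'] at h2
  have h2' : y * Real.log (x + y - 1) - y * Real.log y ≤ x - 1 := by
    have := mul_le_mul_of_nonneg_left h2 hy.le
    have hyy : y * ((x + y - 1) / y) = x + y - 1 := by field_simp
    nlinarith
  linarith
end

section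
/- There are no real numbers x, y, u with x > 0, y > 0, u > 0, x ≠ u and x + y > u satisfying x^x · y^y = u^x · (x + y − u)^y (real powers). -/
theorem no_real_solution_xx_yy_u (x y u : ℝ) :
    ¬ (0 < x ∧ 0 < y ∧ 0 < u ∧ x ≠ u ∧ u < x + y ∧
      x ^ x * y ^ y = u ^ x * (x + y - u) ^ y) := by
  rintro ⟨hx, hy, hu, hxu, huxy, heq⟩
  set v : ℝ := x + y - u with hv
  have hvpos : 0 < v := by simp [hv]; linarith
  -- take logs
  have hlog : x * Real.log x + y * Real.log y = x * Real.log u + y * Real.log v := by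
    have h1 := congrArg Real.log heq
    rw [Real.log_mul (by positivity) (by positivity),
        Real.log_mul (by positivity) (by positivity),
        Real.log_rpow hx, Real.log_rpow hy, Real.log_rpow hu, Real.log_rpow hvpos] at h1
    linarith
  -- strict inequality from log t ≤ t - 1
  have h1 : Real.log (u / x) < u / x - 1 := by
    apply Real.log_lt_sub_one_of_pos (by positivity)
    intro h
    apply hxu
    field_simp at h
    linarith
  have h2 : Real.log (v / y) ≤ v / y - 1 :=
    Real.log_le_sub_one_of_pos (by positivity)
  have e1 : Real.log (u / x) = Real.log u - Real.log x := Real.log_div (ne_of_gt hu) (ne_of_gt hx)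
  have e2 : Real.log (v / y) = Real.log v - Real.log y := Real.log_div (ne_of_gt hvpos) (ne_of_gt hy)
  have k1 : x * Real.log (u / x) < u - x := by
    have := mul_lt_mul_of_pos_left h1 hx
    calc x * Real.log (u / x) < x * (u / x - 1) := this
      _ = u - x := by field_simp
  have k2 : y * Real.log (v / y) ≤ v - y := by
    have := mul_le_mul_of_nonneg_left h2 (le_of_lt hy)
    calc y * Real.log (v / y) ≤ y * (v / y - 1) := this
      _ = v - y := by field_simp
  rw [e1] at k1
  rw [e2] at k2
  have : u + v = x + y := by simp [hv]
  nlinarith [k1, k2, hlog]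
end

section
/- There are no positive integers x, y, u, v with x ≠ u satisfying simultaneously x + y = u + v and x^x · y^y = u^x · v^y. -/
theorem no_nat_solution_system :
    ¬ ∃ x y u v : ℕ, 0 < x ∧ 0 < y ∧ 0 < u ∧ 0 < v ∧ x ≠ u ∧
      x + y = u + v ∧ x ^ x * y ^ y = u ^ x * v ^ y := by
  rintro ⟨x, y, u, v, hx, hy, hu, hv, hxu, hsum, heq⟩
  have hX : (0:ℝ) < x := by exact_mod_cast hx
  have hY : (0:ℝ) < y := by exact_mod_cast hy
  have hU : (0:ℝ) < u := by exact_mod_cast hu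
  have hV : (0:ℝ) < v := by exact_mod_cast hv
  have heqR : (x:ℝ)^x * (y:ℝ)^y = (u:ℝ)^x * (v:ℝ)^y := by exact_mod_cast heq
  have hsumR : (x:ℝ) + y = u + v := by exact_mod_cast hsum
  have hlog : (x:ℝ) * Real.log x + y * Real.log y
      = x * Real.log u + y * Real.log v := by
    have h := congrArg Real.log heqR
    rw [Real.log_mul (by positivity) (by positivity),
        Real.log_mul (by positivity) (by positivity),
        Real.log_pow, Real.log_pow, Real.log_pow, Real.log_pow] at h
    linarith
  have h1 : Real.log ((u:ℝ)/x) < (u:ℝ)/x - 1 := by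
    apply Real.log_lt_sub_one_of_pos (by positivity)
    intro h
    rw [div_eq_one_iff_eq hX.ne'] at h
    exact hxu (by exact_mod_cast h.symm)
  have h2 : Real.log ((v:ℝ)/y) ≤ (v:ℝ)/y - 1 :=
    Real.log_le_sub_one_of_pos (by positivity)
  rw [Real.log_div hU.ne' hX.ne'] at h1
  rw [Real.log_div hV.ne' hY.ne'] at h2
  have h1' : (x:ℝ) * (Real.log u - Real.log x) < u - x := by
    have := mul_lt_mul_of_pos_left h1 hX
    have hx1 : (x:ℝ) * ((u:ℝ)/x - 1) = u - x := by field_simp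
    linarith
  have h2' : (y:ℝ) * (Real.log v - Real.log y) ≤ v - y := by
    have := mul_le_mul_of_nonneg_left h2 hY.le
    have hy1 : (y:ℝ) * ((v:ℝ)/y - 1) = v - y := by field_simp
    linarith
  nlinarith [h1', h2', hlog, hsumR]
end
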